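/- Let A be a unital C*-algebra with a faithful trace τ_A, let b, m ≥ 1, and let Tr denote the canonical (unnormalized) traces on M_b(ℂ) and M_m(ℂ). Let L_A, L_B, L_C be [0,∞]-valued seminorms on A, M_b(ℂ), M_m(ℂ) respectively. Let F₁ : A → M_b(ℂ) be unital completely positive, and F₂ : A → M_b(ℂ) completely positive with Tr(F₂(1)) = 1; assume each Fᵢ admits a linear map Fᵢ# : M_b(ℂ) → A with Tr(Fᵢ(a) y) = τ_A(a Fᵢ#(y)) for all a ∈ A, y ∈ M_b(ℂ). Let G₁ : M_b(ℂ) → M_m(ℂ) be completely positive with Tr(G₁(1)) = 1, and G₂ : M_b(ℂ) → M_m(ℂ) completely positive and trace-preserving (Tr(G₂(y)) = Tr(y) for all y), and let G₂# : M_m(ℂ) → M_b(ℂ) be the unique linear map with Tr(G₂(y) z) = Tr(y G₂#(z)) for all y, z. Assume L_B(F₁(a)) ≤ L_A(a) for all a ∈ A and L_B(G₂#(z)) ≤ L_C(z) for all z ∈ M_m(ℂ). Define functionals: for linear H : A → M_m(ℂ), ω_m(H) on M_m(A) by ω_m(H)(X) = Σ_{r,s} (H(X r s)) r s; for linear H :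 A → M_b(ℂ), ω_b(H) on M_b(A) analogously; for linear G : M_b(ℂ) → M_m(ℂ), Ω(G) on Matrix (Fin b × Fin m) (Fin b × Fin m) ℂ by Ω(G)(Y) = Σ_{p,q,r,s} Y (p,r) (q,s) · (G(E_{pq})) r s. Define induced seminorms: 𝕄 on M_m(A) by 𝕄(X) = sup_{ψ ∈ S(M_m(ℂ))} L_A(Σ_{r,s} ψ(E_{rs}) • X r s) + sup_{φ ∈ S(A)} L_C((r,s) ↦ φ(X s r)); 𝕃 on M_b(A) by the same formula with M_b-indices and L_B in place of L_C; and 𝕂 on Matrix (Fin b × Fin m) (Fin b × Fin m) ℂ by 𝕂(Y) = sup_{ψ ∈ S(M_m(ℂ))} L_B((p,q) ↦ Σ_{r,s} ψ(E_{rs}) Y (p,r) (q,s)) + sup_{χ ∈ S(M_b(ℂ))} L_C((r,s) ↦ Σ_{p,q} χ(E_{pq}) Y (p,s) (q,r)). Then: sup{ |ω_m(G₁∘F₁)(X) − ω_m(G₂∘F₂)(X)| : X ∈ M_m(A), 𝕄(X) ≤ 1 } ≤ sup{ |Ω(G₁)(Y) − Ω(G₂)(Y)| : 𝕂(Y) ≤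 1 } + sup{ |ω_b(F₁)(X') − ω_b(F₂)(X')| : X' ∈ M_b(A), 𝕃(X') ≤ 1 }. -/

import Mathlib

/-!
Given `X ∈ M_m(A)` with `𝕄(X) ≤ 1`, put `Y = (F₁ ⊗ id)(X)` and `X' = (id ⊗ G₂#ᵀ)(X)`. Then
`Ω(G₁)(Y) = ω(G₁F₁)(X)`, `Ω(G₂)(Y) = ω(G₂F₁)(X) = ω(F₁)(X')` and `ω(F₂)(X') = ω(G₂F₂)(X)`, so
`ω(G₁F₁)(X) - ω(G₂F₂)(X)` telescopes into `(Ω(G₁) - Ω(G₂))(Y) + (ω(F₁) - ω(F₂))(X')`.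
Both `Y` and `X'` stay in the unit balls: `F₁` and `G₂#` are Lipschitz, and a state composed with
`F₁` or with `G₂#ᵀ` is again a state. For `F₁` this is unital complete positivity; `G₂#` is
positive as the trace-dual of a positive map, and unital because `G₂` preserves the trace.
-/

open scoped ComplexOrder ENNReal
open Finset

/-- A state on a unital complex *-algebra: a positive unital linear functional. -/
def IsState {D : Type*} [Ring D] [StarRing D] [Module ℂ D] (φ : D →ₗ[ℂ] ℂ) : Prop :=
  (∀ d : D, 0 ≤ φ (star d * d)) ∧ φ 1 = 1

/-- A linear map `F : A → B` is completely positive if for every `n`, applying `F` entrywise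
to `M_n(A)` maps positive elements (elements of the form `y⋆ y`) to positive elements. -/
def IsCompletelyPositive {A B : Type*}
    [NonUnitalSemiring A] [StarRing A] [Module ℂ A]
    [NonUnitalSemiring B] [StarRing B] [Module ℂ B] (F : A →ₗ[ℂ] B) : Prop :=
  ∀ (n : ℕ) (M : Matrix (Fin n) (Fin n) A),
    (∃ Y : Matrix (Fin n) (Fin n) A, M = star Y * Y) →
    ∃ Z : Matrix (Fin n) (Fin n) B, M.map F = star Z * Z

/-- The Monge–Kantorovič distance associated to a `[0,∞]`-valued seminorm. -/
noncomputable def mkDist {V : Type*} (L : V → ℝ≥0∞) (φ ψ : V → ℂ) : ℝ≥0∞ :=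
  ⨆ (x : V) (_ : L x ≤ 1), (‖φ x - ψ x‖₊ : ℝ≥0∞)

/-- The Choi–Jamiolkowski functional of a linear map `H : A → M_k(ℂ)`, as a functional on
`M_k(A)`: `ω(H)(X) = Σ_{r,s} (H (X r s)) r s`. -/
noncomputable def omegaMat {A : Type*} [AddCommMonoid A] [Module ℂ A] {k : ℕ}
    (H : A →ₗ[ℂ] Matrix (Fin k) (Fin k) ℂ) : Matrix (Fin k) (Fin k) A → ℂ :=
  fun X => ∑ r, ∑ s, (H (X r s)) r s

/-- The Choi–Jamiolkowski functional of a linear map `G : M_b(ℂ) → M_m(ℂ)`, as a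
functional on `Matrix (Fin b × Fin m) (Fin b × Fin m) ℂ`:
`Ω(G)(Y) = Σ_{p,q,r,s} Y (p,r) (q,s) * (G (E_{pq})) r s`. -/
noncomputable def OmegaMat {b m : ℕ}
    (G : Matrix (Fin b) (Fin b) ℂ →ₗ[ℂ] Matrix (Fin m) (Fin m) ℂ) :
    Matrix (Fin b × Fin m) (Fin b × Fin m) ℂ → ℂ :=
  fun Y => ∑ p, ∑ q, ∑ r, ∑ s,
    Y (p, r) (q, s) * (G (Matrix.single p q 1)) r s

/-- The induced tensor seminorm on `M_k(A)` built from a seminorm `LA` on `A` and a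
seminorm `LK` on `M_k(ℂ)`. -/
noncomputable def inducedSeminorm {A : Type*} [Ring A] [StarRing A] [Module ℂ A] {k : ℕ}
    (LA : A → ℝ≥0∞) (LK : Matrix (Fin k) (Fin k) ℂ → ℝ≥0∞) :
    Matrix (Fin k) (Fin k) A → ℝ≥0∞ := fun X =>
  (⨆ (ψ : Matrix (Fin k) (Fin k) ℂ →ₗ[ℂ] ℂ) (_ : IsState ψ),
      LA (∑ r, ∑ s, ψ (Matrix.single r s 1) • X r s)) +
    (⨆ (φ : A →ₗ[ℂ] ℂ) (_ : IsState φ), LK (Matrix.of fun r s => φ (X s r)))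

/-- The induced tensor seminorm `𝕂` on `Matrix (Fin b × Fin m) (Fin b × Fin m) ℂ` built
from seminorms `LB` on `M_b(ℂ)` and `LC` on `M_m(ℂ)`. -/
noncomputable def inducedSeminormK {b m : ℕ}
    (LB : Matrix (Fin b) (Fin b) ℂ → ℝ≥0∞) (LC : Matrix (Fin m) (Fin m) ℂ → ℝ≥0∞) :
    Matrix (Fin b × Fin m) (Fin b × Fin m) ℂ → ℝ≥0∞ := fun Y =>
  (⨆ (ψ : Matrix (Fin m) (Fin m) ℂ →ₗ[ℂ] ℂ) (_ : IsState ψ),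
      LB (Matrix.of fun p q =>
        ∑ r, ∑ s, ψ (Matrix.single r s 1) * Y (p, r) (q, s))) +
    (⨆ (χ : Matrix (Fin b) (Fin b) ℂ →ₗ[ℂ] ℂ) (_ : IsState χ),
      LC (Matrix.of fun r s =>
        ∑ p, ∑ q, χ (Matrix.single p q 1) * Y (p, s) (q, r)))

namespace Matrix

variable {n k : Type*} [Fintype n] [Fintype k]

lemma star_dotProduct_mulVec_eq_trace (M : Matrix n n ℂ) (v : n → ℂ) :
    star v ⬝ᵥ (M *ᵥ v) = (vecMulVec v (star v) * M).trace := by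
  rw [vecMulVec_mul, trace_vecMulVec, dotProduct_comm v, ← dotProduct_mulVec]

variable [DecidableEq n] [DecidableEq k]

lemma _root_.LinearMap.map_eq_sum_single {R V : Type*} [CommSemiring R] [AddCommMonoid V]
    [Module R V] (H : Matrix n k R →ₗ[R] V) (y : Matrix n k R) :
    H y = ∑ i, ∑ j, y i j • H (Matrix.single i j 1) := by
  conv_lhs => rw [matrix_eq_sum_single y]
  simp only [map_sum, ← LinearMap.map_smul, smul_single, smul_eq_mul, mul_one]

open scoped MatrixOrder in
lemma PosSemidef.exists_eq_star_mul_self {P : Matrix n n ℂ} (hP : P.PosSemidef) :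
    ∃ d : Matrix n n ℂ, P = star d * d :=
  CStarAlgebra.nonneg_iff_eq_star_mul_self.mp hP.nonneg

lemma PosSemidef.trace_mul_nonneg {P Q : Matrix n n ℂ} (hP : P.PosSemidef)
    (hQ : Q.PosSemidef) : 0 ≤ (P * Q).trace := by
  obtain ⟨d, rfl⟩ := hP.exists_eq_star_mul_self
  rw [mul_assoc, trace_mul_comm, mul_assoc, star_eq_conjTranspose, ← mul_assoc]
  exact (hQ.mul_mul_conjTranspose_same d).trace_nonneg

/-- Unlike `PosSemidef.of_dotProduct_mulVec_nonneg`, no hermiticity hypothesis: over `ℂ` it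
follows from the quadratic form being real. -/
lemma posSemidef_of_forall_dotProduct_mulVec_nonneg {M : Matrix n n ℂ}
    (h : ∀ v, 0 ≤ star v ⬝ᵥ (M *ᵥ v)) : M.PosSemidef := by
  rw [← isPositive_toEuclideanLin_iff, LinearMap.isPositive_iff_complex]
  intro x
  obtain ⟨hre, him⟩ := Complex.nonneg_iff.mp (h x)
  have hreal : star (star x.ofLp ⬝ᵥ M *ᵥ x.ofLp) = star x.ofLp ⬝ᵥ M *ᵥ x.ofLp :=
    Complex.conj_eq_iff_im.mpr him.symm
  simp only [EuclideanSpace.inner_eq_star_dotProduct, toLpLin_apply, dotProduct_star,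
    dotProduct_comm (M *ᵥ _), hreal]
  exact ⟨Complex.conj_eq_iff_re.mp hreal, hre⟩

lemma posSemidef_map_of_trace_adjoint {G : Matrix n n ℂ →ₗ[ℂ] Matrix k k ℂ}
    (hG : ∀ Q, Q.PosSemidef → (G Q).PosSemidef) {Gs : Matrix k k ℂ →ₗ[ℂ] Matrix n n ℂ}
    (hadj : ∀ y z, (G y * z).trace = (y * Gs z).trace) {P : Matrix k k ℂ}
    (hP : P.PosSemidef) : (Gs P).PosSemidef :=
  posSemidef_of_forall_dotProduct_mulVec_nonneg fun v => by
    rw [star_dotProduct_mulVec_eq_trace, ← hadj]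
    exact (hG _ (posSemidef_vecMulVec_self_star v)).trace_mul_nonneg hP

lemma map_one_of_trace_adjoint_of_trace_preserving {G : Matrix n n ℂ →ₗ[ℂ] Matrix k k ℂ}
    (hG : ∀ y, (G y).trace = y.trace) {Gs : Matrix k k ℂ →ₗ[ℂ] Matrix n n ℂ}
    (hadj : ∀ y z, (G y * z).trace = (y * Gs z).trace) : Gs 1 = 1 :=
  ext_iff_trace_mul_left.mpr fun y => by rw [← hadj, mul_one, mul_one, hG]

end Matrix

open Matrix

lemma IsCompletelyPositive.exists_map_star_mul_self {A B : Type*}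
    [NonUnitalSemiring A] [StarRing A] [Module ℂ A]
    [NonUnitalSemiring B] [StarRing B] [Module ℂ B] {F : A →ₗ[ℂ] B}
    (hF : IsCompletelyPositive F) (a : A) : ∃ w : B, F (star a * a) = star w * w := by
  obtain ⟨Z, hZ⟩ := hF 1 (of fun _ _ => star a * a) ⟨of fun _ _ => a, by
    ext i j
    simp [mul_apply, star_apply]⟩
  exact ⟨Z 0 0, by simpa [mul_apply, star_apply] using congrFun (congrFun hZ 0) 0⟩

lemma IsCompletelyPositive.posSemidef_map {n k : Type*} [Fintype n] [DecidableEq n]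
    [Fintype k] [DecidableEq k] {F : Matrix n n ℂ →ₗ[ℂ] Matrix k k ℂ}
    (hF : IsCompletelyPositive F) {Q : Matrix n n ℂ} (hQ : Q.PosSemidef) :
    (F Q).PosSemidef := by
  obtain ⟨d, rfl⟩ := hQ.exists_eq_star_mul_self
  obtain ⟨w, hw⟩ := hF.exists_map_star_mul_self d
  rw [hw, star_eq_conjTranspose]
  exact posSemidef_conjTranspose_mul_self w

lemma IsState.comp {D D' : Type*} [Ring D] [StarRing D] [Module ℂ D]
    [Ring D'] [StarRing D'] [Module ℂ D'] {φ : D →ₗ[ℂ] ℂ} (hφ : IsState φ)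
    {Φ : D' →ₗ[ℂ] D} (hpos : ∀ d, ∃ w, Φ (star d * d) = star w * w) (hunit : Φ 1 = 1) :
    IsState (φ ∘ₗ Φ) := by
  refine ⟨fun d => ?_, by simp [hunit, hφ.2]⟩
  obtain ⟨w, hw⟩ := hpos d
  simpa [hw] using hφ.1 w

/-- `Φᵀ := T ∘ Φ ∘ T`. It appears because `omegaMat` pairs matrices by `∑ y r s * z r s`, whereas
the trace pairing `Tr (y * z)` defining adjoints is `∑ y r s * z s r`. -/
def transposeMap {ι κ : Type*} (Φ : Matrix ι ι ℂ →ₗ[ℂ] Matrix κ κ ℂ) :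
    Matrix ι ι ℂ →ₗ[ℂ] Matrix κ κ ℂ :=
  (transposeLinearEquiv κ κ ℂ ℂ).toLinearMap ∘ₗ Φ ∘ₗ (transposeLinearEquiv ι ι ℂ ℂ).toLinearMap

@[simp]
lemma transposeMap_apply {ι κ : Type*} (Φ : Matrix ι ι ℂ →ₗ[ℂ] Matrix κ κ ℂ)
    (z : Matrix ι ι ℂ) : transposeMap Φ z = (Φ zᵀ)ᵀ :=
  rfl

lemma transposeMap_star_mul_self {ι κ : Type*} [Fintype ι] [DecidableEq ι] [Fintype κ]
    [DecidableEq κ] {Φ : Matrix ι ι ℂ →ₗ[ℂ] Matrix κ κ ℂ}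
    (hΦ : ∀ P, P.PosSemidef → (Φ P).PosSemidef) (z : Matrix ι ι ℂ) :
    ∃ w, transposeMap Φ (star z * z) = star w * w := by
  rw [transposeMap_apply, star_eq_conjTranspose]
  exact (hΦ _ (posSemidef_conjTranspose_mul_self z).transpose).transpose.exists_eq_star_mul_self

section Ampliation

variable {A : Type*} {b m : ℕ}

/-- `(F ⊗ id)(X)` for `X ∈ M_m(A) = A ⊗ M_m(ℂ)`, with `M_b(ℂ) ⊗ M_m(ℂ)` indexed by
`Fin b × Fin m` as in `OmegaMat`. -/
def tensorId (F : A → Matrix (Fin b) (Fin b) ℂ) (X : Matrix (Fin m) (Fin m) A) :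
    Matrix (Fin b × Fin m) (Fin b × Fin m) ℂ :=
  of fun pr qs => F (X pr.2 qs.2) pr.1 qs.1

/-- `(id ⊗ Φ)(X)` for `X = ∑ X r s ⊗ E_{rs} ∈ A ⊗ M_m(ℂ)`. -/
def idTensor [AddCommMonoid A] [Module ℂ A]
    (Φ : Matrix (Fin m) (Fin m) ℂ →ₗ[ℂ] Matrix (Fin b) (Fin b) ℂ)
    (X : Matrix (Fin m) (Fin m) A) : Matrix (Fin b) (Fin b) A :=
  of fun p q => ∑ r, ∑ s, Φ (Matrix.single r s 1) p q • X r s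

variable [AddCommMonoid A] [Module ℂ A]

lemma OmegaMat_tensorId (G : Matrix (Fin b) (Fin b) ℂ →ₗ[ℂ] Matrix (Fin m) (Fin m) ℂ)
    (F : A →ₗ[ℂ] Matrix (Fin b) (Fin b) ℂ) (X : Matrix (Fin m) (Fin m) A) :
    OmegaMat G (tensorId F X) = omegaMat (G ∘ₗ F) X := by
  simp only [OmegaMat, omegaMat, tensorId, LinearMap.comp_apply, of_apply]
  rw [Finset.sum_comm_cycle]
  refine Finset.sum_congr rfl fun r _ => ?_
  rw [Finset.sum_comm_cycle]
  refine Finset.sum_congr rfl fun s _ => ?_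
  simp [G.map_eq_sum_single (F (X r s)), Matrix.sum_apply]

lemma omegaMat_idTensor (F : A →ₗ[ℂ] Matrix (Fin b) (Fin b) ℂ)
    (Φ : Matrix (Fin m) (Fin m) ℂ →ₗ[ℂ] Matrix (Fin b) (Fin b) ℂ)
    (X : Matrix (Fin m) (Fin m) A) :
    omegaMat F (idTensor Φ X) = ∑ r, ∑ s, (F (X r s) * (Φ (Matrix.single r s 1))ᵀ).trace := by
  simp only [omegaMat, idTensor, of_apply, map_sum, map_smul, Matrix.sum_apply, Matrix.smul_apply,
    smul_eq_mul, trace, diag_apply, mul_apply, transpose_apply]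
  rw [Finset.sum_comm_cycle]
  refine Finset.sum_congr rfl fun r _ => ?_
  rw [Finset.sum_comm_cycle]
  exact Finset.sum_congr rfl fun s _ => by simp only [mul_comm]

lemma omegaMat_idTensor_transposeMap (F : A →ₗ[ℂ] Matrix (Fin b) (Fin b) ℂ)
    {G : Matrix (Fin b) (Fin b) ℂ →ₗ[ℂ] Matrix (Fin m) (Fin m) ℂ}
    {Gs : Matrix (Fin m) (Fin m) ℂ →ₗ[ℂ] Matrix (Fin b) (Fin b) ℂ}
    (hadj : ∀ y z, (G y * z).trace = (y * Gs z).trace) (X : Matrix (Fin m) (Fin m) A) :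
    omegaMat F (idTensor (transposeMap Gs) X) = omegaMat (G ∘ₗ F) X := by
  simp only [omegaMat_idTensor, transposeMap_apply, transpose_transpose, transpose_single,
    ← hadj, trace_mul_single, MulOpposite.op_one, one_smul]
  rfl

lemma sum_smul_idTensor (ψ : Matrix (Fin b) (Fin b) ℂ →ₗ[ℂ] ℂ)
    (Φ : Matrix (Fin m) (Fin m) ℂ →ₗ[ℂ] Matrix (Fin b) (Fin b) ℂ)
    (X : Matrix (Fin m) (Fin m) A) :
    ∑ p, ∑ q, ψ (Matrix.single p q 1) • idTensor Φ X p q =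
      ∑ r, ∑ s, ψ (Φ (Matrix.single r s 1)) • X r s := by
  simp only [idTensor, of_apply, Finset.smul_sum, smul_smul, ψ.map_eq_sum_single (Φ _),
    Finset.sum_smul, smul_eq_mul]
  rw [Finset.sum_comm_cycle]
  refine Finset.sum_congr rfl fun r _ => ?_
  rw [Finset.sum_comm_cycle]
  exact Finset.sum_congr rfl fun s _ => by simp only [mul_comm]

lemma map_idTensor_transpose (φ : A →ₗ[ℂ] ℂ)
    (Φ : Matrix (Fin m) (Fin m) ℂ →ₗ[ℂ] Matrix (Fin b) (Fin b) ℂ)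
    (X : Matrix (Fin m) (Fin m) A) :
    (of fun p q => φ (idTensor Φ X q p)) = (Φ (of fun r s => φ (X s r))ᵀ)ᵀ := by
  ext p q
  simp [idTensor, Φ.map_eq_sum_single (of fun r s => φ (X s r))ᵀ, Matrix.sum_apply, mul_comm]

end Ampliation

lemma mkDist_le_add_of_chain {V V' V'' : Type*} {L : V → ℝ≥0∞} {L' : V' → ℝ≥0∞}
    {L'' : V'' → ℝ≥0∞} {φ ψ : V → ℂ} {φ' ψ' : V' → ℂ} {φ'' ψ'' : V'' → ℂ}
    (f : V → V') (g : V → V'') (hf : ∀ x, L' (f x) ≤ L x) (hg : ∀ x, L'' (g x) ≤ L x)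
    (hφ : ∀ x, φ x = φ' (f x)) (hmid : ∀ x, ψ' (f x) = φ'' (g x)) (hψ : ∀ x, ψ'' (g x) = ψ x) :
    mkDist L φ ψ ≤ mkDist L' φ' ψ' + mkDist L'' φ'' ψ'' := by
  refine iSup₂_le fun x hx => ?_
  have hsplit : φ x - ψ x = (φ' (f x) - ψ' (f x)) + (φ'' (g x) - ψ'' (g x)) := by
    rw [hφ, hmid, ← hψ]; ring
  calc (‖φ x - ψ x‖₊ : ℝ≥0∞)
      ≤ ‖φ' (f x) - ψ' (f x)‖₊ + ‖φ'' (g x) - ψ'' (g x)‖₊ := by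
        rw [hsplit]; exact_mod_cast nnnorm_add_le _ _
    _ ≤ mkDist L' φ' ψ' + mkDist L'' φ'' ψ'' :=
        add_le_add (le_iSup₂_of_le (f x) ((hf x).trans hx) le_rfl)
          (le_iSup₂_of_le (g x) ((hg x).trans hx) le_rfl)

section InducedSeminorm

variable {A : Type*} [Ring A] [StarRing A] [Module ℂ A] {b m : ℕ} {LA : A → ℝ≥0∞}
  {LB : Matrix (Fin b) (Fin b) ℂ → ℝ≥0∞} {LC : Matrix (Fin m) (Fin m) ℂ → ℝ≥0∞}

lemma inducedSeminormK_tensorId_le {F : A →ₗ[ℂ] Matrix (Fin b) (Fin b) ℂ}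
    (hF : IsCompletelyPositive F) (hF1 : F 1 = 1) (hLip : ∀ a, LB (F a) ≤ LA a)
    (X : Matrix (Fin m) (Fin m) A) :
    inducedSeminormK LB LC (tensorId F X) ≤ inducedSeminorm LA LC X := by
  refine add_le_add (iSup₂_le fun ψ hψ => le_iSup₂_of_le ψ hψ ?_)
    (iSup₂_le fun χ hχ => le_iSup₂_of_le (χ ∘ₗ F)
      (hχ.comp hF.exists_map_star_mul_self hF1) (le_of_eq ?_))
  · refine le_of_eq_of_le (congrArg LB ?_) (hLip (∑ r, ∑ s, ψ (Matrix.single r s 1) • X r s))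
    ext p q
    simp [tensorId, Matrix.sum_apply]
  · congr 1
    ext r s
    simp [tensorId, χ.map_eq_sum_single (F (X s r)), mul_comm]

lemma inducedSeminorm_idTensor_transposeMap_le
    {Gs : Matrix (Fin m) (Fin m) ℂ →ₗ[ℂ] Matrix (Fin b) (Fin b) ℂ}
    (hpos : ∀ P, P.PosSemidef → (Gs P).PosSemidef) (hunit : Gs 1 = 1)
    (hLip : ∀ z, LB (Gs z) ≤ LC z) (X : Matrix (Fin m) (Fin m) A) :
    inducedSeminorm LA LB (idTensor (transposeMap Gs) X) ≤ inducedSeminorm LA LC X := by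
  refine add_le_add (iSup₂_le fun ψ hψ => le_iSup₂_of_le (ψ ∘ₗ transposeMap Gs)
      (hψ.comp (transposeMap_star_mul_self hpos) (by simp [hunit])) (le_of_eq ?_))
    (iSup₂_le fun φ hφ => le_iSup₂_of_le φ hφ ?_)
  · rw [sum_smul_idTensor]
    rfl
  · rw [map_idTensor_transpose]
    simpa using hLip (of fun r s => φ (X s r))

end InducedSeminorm

theorem chaining_inequality_general
    (A : Type*) [CStarAlgebra A]
    (b m : ℕ)
    (LA : A → ℝ≥0∞)
    (LB : Matrix (Fin b) (Fin b) ℂ → ℝ≥0∞)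
    (LC : Matrix (Fin m) (Fin m) ℂ → ℝ≥0∞)
    (F₁ : A →ₗ[ℂ] Matrix (Fin b) (Fin b) ℂ)
    (hF₁_cp : IsCompletelyPositive F₁) (hF₁_unital : F₁ 1 = 1)
    (F₂ : A →ₗ[ℂ] Matrix (Fin b) (Fin b) ℂ)
    (G₁ : Matrix (Fin b) (Fin b) ℂ →ₗ[ℂ] Matrix (Fin m) (Fin m) ℂ)
    (G₂ : Matrix (Fin b) (Fin b) ℂ →ₗ[ℂ] Matrix (Fin m) (Fin m) ℂ)
    (hG₂_cp : IsCompletelyPositive G₂)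
    (hG₂_trPres : ∀ y : Matrix (Fin b) (Fin b) ℂ, Matrix.trace (G₂ y) = Matrix.trace y)
    (G₂sharp : Matrix (Fin m) (Fin m) ℂ →ₗ[ℂ] Matrix (Fin b) (Fin b) ℂ)
    (hG₂_adj : ∀ (y : Matrix (Fin b) (Fin b) ℂ) (z : Matrix (Fin m) (Fin m) ℂ),
      Matrix.trace (G₂ y * z) = Matrix.trace (y * G₂sharp z))
    (hLip_F₁ : ∀ a : A, LB (F₁ a) ≤ LA a)
    (hLip_G₂sharp : ∀ z : Matrix (Fin m) (Fin m) ℂ, LB (G₂sharp z) ≤ LC z) :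
    mkDist (inducedSeminorm LA LC) (omegaMat (G₁ ∘ₗ F₁)) (omegaMat (G₂ ∘ₗ F₂)) ≤
      mkDist (inducedSeminormK LB LC) (OmegaMat G₁) (OmegaMat G₂) +
        mkDist (inducedSeminorm LA LB) (omegaMat F₁) (omegaMat F₂) := by
  have hG₂sharp_pos : ∀ P, P.PosSemidef → (G₂sharp P).PosSemidef := fun _ =>
    posSemidef_map_of_trace_adjoint (fun _ => hG₂_cp.posSemidef_map) hG₂_adj
  have hG₂sharp_unital : G₂sharp 1 = 1 :=
    map_one_of_trace_adjoint_of_trace_preserving hG₂_trPres hG₂_adj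
  refine mkDist_le_add_of_chain (tensorId F₁) (idTensor (transposeMap G₂sharp))
    (inducedSeminormK_tensorId_le hF₁_cp hF₁_unital hLip_F₁)
    (inducedSeminorm_idTensor_transposeMap_le hG₂sharp_pos hG₂sharp_unital hLip_G₂sharp)
    (fun X => (OmegaMat_tensorId G₁ F₁ X).symm)
    (fun X => by rw [OmegaMat_tensorId, omegaMat_idTensor_transposeMap F₁ hG₂_adj])
    (omegaMat_idTensor_transposeMap F₂ hG₂_adj)

/-- The chaining inequality for the Monge–Kantorovič metrics induced
via the Choi–Jamiolkowski functionals, for channels `A → M_b(ℂ) → M_m(ℂ)`. -/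
theorem chaining_inequality
    (A : Type*) [CStarAlgebra A]
    (τA : A →ₗ[ℂ] ℂ) (hτA_ne : τA ≠ 0)
    (hτA_pos : ∀ a : A, 0 ≤ τA (star a * a))
    (hτA_tracial : ∀ a₁ a₂ : A, τA (a₁ * a₂) = τA (a₂ * a₁))
    (hτA_faithful : ∀ a : A, τA (star a * a) = 0 → a = 0)
    (b m : ℕ) (hb : 1 ≤ b) (hm : 1 ≤ m)
    (LA : A → ℝ≥0∞)
    (hLA_add : ∀ x y : A, LA (x + y) ≤ LA x + LA y)
    (hLA_smul : ∀ (c : ℂ), c ≠ 0 → ∀ x : A, LA (c • x) = (‖c‖₊ : ℝ≥0∞) * LA x)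
    (LB : Matrix (Fin b) (Fin b) ℂ → ℝ≥0∞)
    (hLB_add : ∀ x y, LB (x + y) ≤ LB x + LB y)
    (hLB_smul : ∀ (c : ℂ), c ≠ 0 → ∀ x, LB (c • x) = (‖c‖₊ : ℝ≥0∞) * LB x)
    (LC : Matrix (Fin m) (Fin m) ℂ → ℝ≥0∞)
    (hLC_add : ∀ x y, LC (x + y) ≤ LC x + LC y)
    (hLC_smul : ∀ (c : ℂ), c ≠ 0 → ∀ x, LC (c • x) = (‖c‖₊ : ℝ≥0∞) * LC x)
    (F₁ : A →ₗ[ℂ] Matrix (Fin b) (Fin b) ℂ)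
    (hF₁_cp : IsCompletelyPositive F₁) (hF₁_unital : F₁ 1 = 1)
    (F₂ : A →ₗ[ℂ] Matrix (Fin b) (Fin b) ℂ)
    (hF₂_cp : IsCompletelyPositive F₂) (hF₂_tr : Matrix.trace (F₂ 1) = 1)
    (F₁sharp : Matrix (Fin b) (Fin b) ℂ →ₗ[ℂ] A)
    (hF₁_adj : ∀ (a : A) (y : Matrix (Fin b) (Fin b) ℂ),
      Matrix.trace (F₁ a * y) = τA (a * F₁sharp y))
    (F₂sharp : Matrix (Fin b) (Fin b) ℂ →ₗ[ℂ] A)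
    (hF₂_adj : ∀ (a : A) (y : Matrix (Fin b) (Fin b) ℂ),
      Matrix.trace (F₂ a * y) = τA (a * F₂sharp y))
    (G₁ : Matrix (Fin b) (Fin b) ℂ →ₗ[ℂ] Matrix (Fin m) (Fin m) ℂ)
    (hG₁_cp : IsCompletelyPositive G₁) (hG₁_tr : Matrix.trace (G₁ 1) = 1)
    (G₂ : Matrix (Fin b) (Fin b) ℂ →ₗ[ℂ] Matrix (Fin m) (Fin m) ℂ)
    (hG₂_cp : IsCompletelyPositive G₂)
    (hG₂_trPres : ∀ y : Matrix (Fin b) (Fin b) ℂ, Matrix.trace (G₂ y) = Matrix.trace y)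
    (G₂sharp : Matrix (Fin m) (Fin m) ℂ →ₗ[ℂ] Matrix (Fin b) (Fin b) ℂ)
    (hG₂_adj : ∀ (y : Matrix (Fin b) (Fin b) ℂ) (z : Matrix (Fin m) (Fin m) ℂ),
      Matrix.trace (G₂ y * z) = Matrix.trace (y * G₂sharp z))
    (hLip_F₁ : ∀ a : A, LB (F₁ a) ≤ LA a)
    (hLip_G₂sharp : ∀ z : Matrix (Fin m) (Fin m) ℂ, LB (G₂sharp z) ≤ LC z) :
    mkDist (inducedSeminorm LA LC) (omegaMat (G₁ ∘ₗ F₁)) (omegaMat (G₂ ∘ₗ F₂)) ≤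
      mkDist (inducedSeminormK LB LC) (OmegaMat G₁) (OmegaMat G₂) +
        mkDist (inducedSeminorm LA LB) (omegaMat F₁) (omegaMat F₂) :=
  chaining_inequality_general A b m LA LB LC F₁ hF₁_cp hF₁_unital F₂ G₁ G₂ hG₂_cp hG₂_trPres G₂sharp
    hG₂_adj hLip_F₁ hLip_G₂sharp
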